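/- Let D ≥ 1, J ≥ 1, λ₁, …, λ_D > 0, and x, x' ∈ ℝ^D. Let ω₁, …, ω_J ∈ ℝ^D be i.i.d. random vectors, each with independent coordinates distributed as N(0, 2/λ_d²) for d = 1, …, D, and let φ be the random Fourier feature map built from ω₁, …, ω_J. Then E[ φ(x)ᵀ φ(x') ] = k_SE-ARD(x, x'); that is, the random feature inner product is an unbiased estimator of the SE-ARD kernel. -/

import Mathlib

open Matrix MeasureTheory ProbabilityTheory

/-- Random Fourier feature map `φ : ℝ^D → ℝ^{2J}` built from frequency vectors
`ω₁, …, ω_J`: for each `j`, the pair of components `(1/√J) sin(xᵀω_j)` and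
`(1/√J) cos(xᵀω_j)` (the `2J` coordinates are indexed by `Fin J × Bool`). -/
noncomputable def rff {D J : ℕ} (ω : Fin J → (Fin D → ℝ)) (x : Fin D → ℝ) :
    Fin J × Bool → ℝ :=
  fun p => (1 / Real.sqrt J) *
    (if p.2 then Real.cos (x ⬝ᵥ ω p.1) else Real.sin (x ⬝ᵥ ω p.1))

/-!
Expanding the product with `cos (a - b) = cos a cos b + sin a sin b` gives
`φ(x)ᵀφ(x') = J⁻¹ ∑ⱼ cos ((x - x')ᵀωⱼ)`, so, the `ωⱼ` being identically distributed, the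
expectation is `E[cos (tᵀω)]` with `t = x - x'`: the real part of the characteristic function
of `ω` at `t`. The coordinates of `ω` are independent centred Gaussians of variances
`v_d = 2 / λ_d²`, so it factorises as `∏_d exp (-v_d t_d² / 2) = exp (-∑_d t_d² / λ_d²)`.
-/

section PiGaussian

variable {ι : Type*} [Fintype ι] (v : ι → NNReal) (t : ι → ℝ)

open Complex in
theorem integral_cexp_dotProduct_pi_gaussianReal :
    ∫ w, cexp ((t ⬝ᵥ w : ℝ) * I) ∂(Measure.pi fun i => gaussianReal 0 (v i)) =
      cexp (-∑ i, (v i : ℝ) * t i ^ 2 / 2 : ℝ) := by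
  have hprod (w : ι → ℝ) : cexp ((t ⬝ᵥ w : ℝ) * I) = ∏ i, cexp (t i * w i * I) := by
    simp only [dotProduct, ofReal_sum, ofReal_mul, Finset.sum_mul, Complex.exp_sum]
  simp_rw [hprod]
  rw [integral_fintype_prod_eq_prod (fun i (y : ℝ) => cexp (t i * y * I))]
  simp_rw [← charFun_apply_real, charFun_gaussianReal, ← Complex.exp_sum]
  push_cast
  simp [← Finset.sum_neg_distrib]

theorem integral_cos_dotProduct_pi_gaussianReal :
    ∫ w, Real.cos (t ⬝ᵥ w) ∂(Measure.pi fun i => gaussianReal 0 (v i)) =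
      Real.exp (-∑ i, (v i : ℝ) * t i ^ 2 / 2) := by
  have hint : Integrable (fun w : ι → ℝ => Complex.exp ((t ⬝ᵥ w : ℝ) * Complex.I))
      (Measure.pi fun i => gaussianReal 0 (v i)) :=
    Integrable.of_bound (by fun_prop) 1 (ae_of_all _ fun w => by simp [Complex.norm_exp])
  have h := congrArg Complex.re (integral_cexp_dotProduct_pi_gaussianReal v t)
  rw [← RCLike.re_to_complex, ← integral_re hint, Complex.exp_ofReal_re] at h
  simpa [Complex.exp_ofReal_mul_I_re] using h

end PiGaussian

theorem integral_sum_comp_eval_pi {ι α : Type*} [Fintype ι] [MeasurableSpace α]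
    (μ : Measure α) [IsProbabilityMeasure μ] {f : α → ℝ} (hf : Integrable f μ) :
    ∫ ω, ∑ i, f (ω i) ∂(Measure.pi fun _ : ι => μ) = Fintype.card ι * ∫ x, f x ∂μ := by
  rw [integral_finsetSum _ fun i _ => integrable_comp_eval hf]
  simp [integral_comp_eval (μ := fun _ : ι => μ) hf.aestronglyMeasurable]

theorem rff_dotProduct_rff {D J : ℕ} (ω : Fin J → Fin D → ℝ) (x x' : Fin D → ℝ) :
    rff ω x ⬝ᵥ rff ω x' = (J : ℝ)⁻¹ * ∑ j, Real.cos ((x - x') ⬝ᵥ ω j) := by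
  simp only [dotProduct, rff, Fintype.sum_prod_type, Fintype.sum_bool, if_true,
    Bool.false_eq_true, if_false, Finset.mul_sum]
  refine Finset.sum_congr rfl fun j _ => ?_
  rw [show ∑ i, (x - x') i * ω j i = ∑ i, x i * ω j i - ∑ i, x' i * ω j i by
    simp [sub_mul], Real.cos_sub]
  set a := ∑ i, x i * ω j i
  set b := ∑ i, x' i * ω j i
  have : (1 / √(J : ℝ)) * (1 / √(J : ℝ)) = (J : ℝ)⁻¹ := by
    rw [div_mul_div_comm, one_mul, Real.mul_self_sqrt J.cast_nonneg, one_div]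
  linear_combination (Real.cos a * Real.cos b + Real.sin a * Real.sin b) * this

theorem stmt10_general {D J : ℕ} (hJ : 1 ≤ J) (lam : Fin D → ℝ)
    (hlam : ∀ d, 0 < lam d) (x x' : Fin D → ℝ) :
    ∫ ω : Fin J → (Fin D → ℝ), rff ω x ⬝ᵥ rff ω x'
        ∂(Measure.pi fun _ : Fin J =>
            Measure.pi fun d => gaussianReal 0 (2 / lam d ^ 2).toNNReal) =
      Real.exp (-∑ d, (x d - x' d) ^ 2 / lam d ^ 2) := by
  have hcos : Integrable (fun w => Real.cos ((x - x') ⬝ᵥ w))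
      (Measure.pi fun d => gaussianReal 0 (2 / lam d ^ 2).toNNReal) :=
    Integrable.of_bound (by fun_prop) 1 (ae_of_all _ fun w => Real.abs_cos_le_one _)
  simp_rw [rff_dotProduct_rff, integral_const_mul, integral_sum_comp_eval_pi _ hcos,
    integral_cos_dotProduct_pi_gaussianReal, Fintype.card_fin]
  rw [inv_mul_cancel_left₀ (Nat.cast_ne_zero.mpr (by omega))]
  congr 2
  refine Finset.sum_congr rfl fun d _ => ?_
  have := hlam d
  rw [Real.coe_toNNReal _ (by positivity), Pi.sub_apply]
  field_simp

/-- With `ω₁, …, ω_J` i.i.d., each with independent coordinates `N(0, 2/λ_d²)`, the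
random feature inner product is an unbiased estimator of the SE-ARD kernel:
`E[φ(x)ᵀφ(x')] = exp(−Σ_d (x_d − x'_d)²/λ_d²)`. -/
theorem stmt10 {D J : ℕ} (hD : 1 ≤ D) (hJ : 1 ≤ J) (lam : Fin D → ℝ)
    (hlam : ∀ d, 0 < lam d) (x x' : Fin D → ℝ) :
    ∫ ω : Fin J → (Fin D → ℝ), rff ω x ⬝ᵥ rff ω x'
        ∂(Measure.pi fun _ : Fin J =>
            Measure.pi fun d => gaussianReal 0 (2 / lam d ^ 2).toNNReal) =
      Real.exp (-∑ d, (x d - x' d) ^ 2 / lam d ^ 2) :=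
  stmt10_general hJ lam hlam x x'
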